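/- arXiv:1411.6946 — 2 statements merged into one kernel-verified Lean document; each statement's English description precedes it below -/
import Mathlib

section
/- Weighted Hardy inequality on the punctured ball: for every δ ≠ 0 and every smooth compactly supported function u on B \ {0} ⊂ ℝ³ (requiring u ≡ 0 on ∂B only when δ < 0), one has ‖u‖_{W^{1,p}_{ρ,δ}} ≤ (1/|δ|) ‖∇u‖_{L^p_{ρ,δ−1}}, where ‖u‖_{L^p_{ρ,δ}}^p = ∫ |ρ^{−δ−3/p} u|^p dv. -/
/-!
Write `n = finrank ℝ E`, `ρ = ‖x‖` and `a = -pδ - n`. For `φ` of class `C¹` with compact support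
avoiding the origin, the divergence theorem for the radial field `ρ ^ a φ x` gives
`∫ ρ ^ a Dφ(x) x = -(a + n) ∫ ρ ^ a φ = pδ ∫ ρ ^ a φ`. For `φ = |u| ^ p` we have
`|Dφ(x) x| ≤ p |u| ^ (p - 1) ‖Du‖ ρ`, hence
`|δ| ∫ ρ ^ a |u| ^ p ≤ ∫ ρ ^ (a + 1) |u| ^ (p - 1) ‖Du‖`, and Hölder's inequality with exponents
`1 - 1/p` and `1/p` bounds the right-hand side by
`(∫ ρ ^ a |u| ^ p) ^ (1 - 1/p) (∫ ρ ^ (a + p) ‖Du‖ ^ p) ^ (1/p)`.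
Since `|u| ^ p` need not be `C¹` (take `p = 1`), the identity is applied to
`(u² + ε²) ^ (p/2) - |ε| ^ p` instead, and `ε → 0` by continuity of both sides in `ε`.
-/

open Real MeasureTheory

noncomputable section

abbrev E3 := EuclideanSpace ℝ (Fin 3)

open Module Function Filter Set

section Support

variable {E : Type*} [NormedAddCommGroup E]

theorem ContDiffOn.contDiff_of_notMem_tsupport [NormedSpace ℝ E] {F : Type*}
    [NormedAddCommGroup F] [NormedSpace ℝ F] {k : WithTop ℕ∞} {f : E → F} {a : E}
    (hf : ContDiffOn ℝ k f {x | x ≠ a}) (ha : a ∉ tsupport f) : ContDiff ℝ k f := by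
  refine contDiff_iff_contDiffAt.2 fun x ↦ ?_
  rcases eq_or_ne x a with rfl | hx
  · exact contDiffAt_const.congr_of_eventuallyEq (notMem_tsupport_iff_eventuallyEq.1 ha)
  · exact hf.contDiffAt (isOpen_ne.mem_nhds hx)

theorem Continuous.support_subset_ball [NormedSpace ℝ E] {F : Type*} [NormedAddCommGroup F]
    {f : E → F} (hf : Continuous f) {r : ℝ} (hr : r ≠ 0)
    (h : tsupport f ⊆ Metric.closedBall 0 r) : support f ⊆ Metric.ball 0 r := by
  rw [← interior_closedBall 0 hr]
  exact interior_maximal (subset_tsupport f |>.trans h) hf.isOpen_support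

theorem continuous_rpow_norm_mul_uncurry {X : Type*} [TopologicalSpace X] {h : X → E → ℝ}
    (hh : Continuous h.uncurry) {K : Set E} (hK : IsClosed K) (h0 : (0 : E) ∉ K)
    (hK0 : ∀ t, ∀ x ∉ K, h t x = 0) (b : ℝ) :
    Continuous fun q : X × E ↦ ‖q.2‖ ^ b * h q.1 q.2 := by
  refine continuous_iff_continuousAt.2 fun ⟨t, x⟩ ↦ ?_
  rcases eq_or_ne x 0 with rfl | hx
  · refine continuousAt_const (y := (0 : ℝ)) |>.congr ?_
    filter_upwards [prod_mem_nhds univ_mem (hK.isOpen_compl.mem_nhds h0)] with q hq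
    simp [hK0 q.1 q.2 hq.2]
  · have hρ : ContinuousAt (fun q : X × E ↦ ‖q.2‖) (t, x) := by fun_prop
    exact (hρ.rpow_const (Or.inl (norm_ne_zero_iff.2 hx))).mul hh.continuousAt

theorem continuous_integral_rpow_norm_mul [MeasurableSpace E] [BorelSpace E] {μ : Measure E}
    [IsLocallyFiniteMeasure μ] {X : Type*} [TopologicalSpace X] [FirstCountableTopology X]
    [LocallyCompactSpace X] {h : X → E → ℝ} (hh : Continuous h.uncurry) {K : Set E}
    (hK : IsCompact K) (h0 : (0 : E) ∉ K) (hK0 : ∀ t, ∀ x ∉ K, h t x = 0) (b : ℝ) :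
    Continuous fun t ↦ ∫ x, ‖x‖ ^ b * h t x ∂μ := by
  have hset : ∀ t, ∫ x in K, ‖x‖ ^ b * h t x ∂μ = ∫ x, ‖x‖ ^ b * h t x ∂μ := fun t ↦
    setIntegral_eq_integral_of_forall_compl_eq_zero fun x hx ↦ by simp [hK0 t x hx]
  simp_rw [← hset]
  exact continuous_parametric_integral_of_continuous
    (continuous_rpow_norm_mul_uncurry hh hK.isClosed h0 hK0 b) hK

end Support

section RpowNorm

variable {E : Type*} [NormedAddCommGroup E] [InnerProductSpace ℝ E]

theorem ContDiff.rpow_norm_mul {k : WithTop ℕ∞} {g : E → ℝ} (hg : ContDiff ℝ k g)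
    (h0 : (0 : E) ∉ tsupport g) (b : ℝ) : ContDiff ℝ k fun x ↦ ‖x‖ ^ b * g x := by
  refine ContDiffOn.contDiff_of_notMem_tsupport (fun x hx ↦ ?_)
    fun h ↦ h0 (tsupport_mul_subset_right h)
  exact (((contDiffAt_norm ℝ hx).rpow_const_of_ne (norm_ne_zero_iff.2 hx)).mul
    hg.contDiffAt).contDiffWithinAt

theorem Continuous.rpow_norm_mul {g : E → ℝ} (hg : Continuous g) (h0 : (0 : E) ∉ tsupport g)
    (b : ℝ) : Continuous fun x ↦ ‖x‖ ^ b * g x :=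
  contDiff_zero.1 ((contDiff_zero.2 hg).rpow_norm_mul h0 b)

theorem Continuous.integrable_rpow_norm_mul [MeasurableSpace E] [BorelSpace E] {μ : Measure E}
    [IsFiniteMeasureOnCompacts μ] {g : E → ℝ} (hg : Continuous g) (hgs : HasCompactSupport g)
    (h0 : (0 : E) ∉ tsupport g) (b : ℝ) : Integrable (fun x ↦ ‖x‖ ^ b * g x) μ :=
  (hg.rpow_norm_mul h0 b).integrable_of_hasCompactSupport hgs.mul_left

/-- Euler's identity for the homogeneous function `‖·‖ ^ a`, read off along the ray `t ↦ t • x`. -/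
theorem fderiv_rpow_norm_apply_self {x : E} (hx : x ≠ 0) (a : ℝ) :
    fderiv ℝ (fun y ↦ ‖y‖ ^ a) x x = a * ‖x‖ ^ a := by
  have hd : DifferentiableAt ℝ (fun y : E ↦ ‖y‖ ^ a) x :=
    ((contDiffAt_norm ℝ hx).rpow_const_of_ne (norm_ne_zero_iff.2 hx)).differentiableAt one_ne_zero
  have h1 : HasDerivAt (fun t : ℝ ↦ ‖t • x‖ ^ a) (fderiv ℝ (fun y ↦ ‖y‖ ^ a) x x) 1 := by
    have hl : HasDerivAt (fun t : ℝ ↦ t • x) x 1 := by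
      simpa using (hasDerivAt_id (1 : ℝ)).smul_const x
    have hd' : HasFDerivAt (fun y : E ↦ ‖y‖ ^ a) (fderiv ℝ (fun y ↦ ‖y‖ ^ a) x) ((1 : ℝ) • x) := by
      simpa using hd.hasFDerivAt
    exact hd'.comp_hasDerivAt 1 hl
  have h2 : HasDerivAt (fun t : ℝ ↦ ‖t • x‖ ^ a) (a * ‖x‖ ^ a) 1 := by
    have : HasDerivAt (fun t : ℝ ↦ t ^ a * ‖x‖ ^ a) (a * ‖x‖ ^ a) 1 := by
      simpa using (hasDerivAt_rpow_const (x := 1) (p := a) (Or.inl one_ne_zero)).mul_const (‖x‖ ^ a)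
    refine this.congr_of_eventuallyEq ?_
    filter_upwards [lt_mem_nhds one_pos] with t ht
    rw [norm_smul, Real.norm_of_nonneg ht.le, mul_rpow ht.le (norm_nonneg x)]
  exact h1.unique h2

theorem fderiv_rpow_norm_mul_apply_self {g : E → ℝ} {x : E} (hx : x ≠ 0)
    (hg : DifferentiableAt ℝ g x) (a : ℝ) :
    fderiv ℝ (fun y ↦ ‖y‖ ^ a * g y) x x = a * (‖x‖ ^ a * g x) + ‖x‖ ^ a * fderiv ℝ g x x := by
  have hd : DifferentiableAt ℝ (fun y : E ↦ ‖y‖ ^ a) x :=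
    ((contDiffAt_norm ℝ hx).rpow_const_of_ne (norm_ne_zero_iff.2 hx)).differentiableAt one_ne_zero
  rw [fderiv_fun_mul hd hg]
  simp only [add_apply, smul_apply, smul_eq_mul,
    fderiv_rpow_norm_apply_self hx]
  ring

end RpowNorm

section Divergence

variable {E : Type*} [NormedAddCommGroup E] [NormedSpace ℝ E] [FiniteDimensional ℝ E]
  [MeasurableSpace E] [BorelSpace E] {μ : Measure E} [μ.IsAddHaarMeasure]

/-- The divergence theorem for the radial field `x ↦ c x • x`, whose divergence is
`finrank ℝ E * c x + fderiv ℝ c x x`. -/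
theorem integral_fderiv_apply_self {c : E → ℝ} (hc : ContDiff ℝ 1 c) (hcs : HasCompactSupport c) :
    ∫ x, fderiv ℝ c x x ∂μ = -finrank ℝ E * ∫ x, c x ∂μ := by
  set b := finBasis ℝ E
  let ℓ : Fin (finrank ℝ E) → E →L[ℝ] ℝ := fun i ↦ LinearMap.toContinuousLinearMap (b.coord i)
  have hDc : Continuous (fderiv ℝ c) := hc.continuous_fderiv one_ne_zero
  have hcd : Differentiable ℝ c := hc.differentiable one_ne_zero
  have hint : ∀ i, Integrable (fun x ↦ fderiv ℝ c x (b i) * ℓ i x) μ := fun i ↦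
    ((hDc.clm_apply continuous_const).mul (ℓ i).continuous).integrable_of_hasCompactSupport
      (((hcs.fderiv ℝ).comp_left (g := fun L : E →L[ℝ] ℝ ↦ L (b i)) rfl).mul_right)
  have hcoord : ∀ i, ∫ x, fderiv ℝ c x (b i) * ℓ i x ∂μ = -∫ x, c x ∂μ := by
    intro i
    have hℓ : ∀ x, fderiv ℝ (ℓ i) x (b i) = 1 := fun x ↦ by
      rw [(ℓ i).fderiv]
      simp [ℓ]
    have h := integral_mul_fderiv_eq_neg_fderiv_mul_of_integrable (μ := μ) (v := b i) (hint i)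
      (by simpa only [hℓ, mul_one] using hc.continuous.integrable_of_hasCompactSupport hcs)
      ((hc.continuous.mul (ℓ i).continuous).integrable_of_hasCompactSupport hcs.mul_right)
      (fun x _ ↦ hcd x) (fun x _ ↦ (ℓ i).differentiableAt)
    simp only [hℓ, mul_one] at h
    linarith
  have hexpand : ∀ x, fderiv ℝ c x x = ∑ i, fderiv ℝ c x (b i) * ℓ i x := by
    intro x
    conv_lhs => rw [← b.sum_repr x]
    simp only [map_sum, map_smul, smul_eq_mul]
    exact Finset.sum_congr rfl fun i _ ↦ by simp [ℓ, b.coord_apply, mul_comm]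
  simp_rw [hexpand]
  rw [integral_finsetSum _ fun i _ ↦ hint i]
  simp [hcoord]

end Divergence

theorem sq_rpow_div_two (t q : ℝ) : (t ^ 2) ^ (q / 2) = |t| ^ q := by
  rw [rpow_div_two_eq_sqrt q (sq_nonneg t), sqrt_sq_eq_abs]

def smoothAbsRpow (p ε t : ℝ) : ℝ := (t ^ 2 + ε ^ 2) ^ (p / 2) - (ε ^ 2) ^ (p / 2)

namespace smoothAbsRpow

variable {p ε : ℝ}

@[simp]
theorem apply_zero : smoothAbsRpow p ε 0 = 0 := by
  simp [smoothAbsRpow]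

theorem zero_eps (hp : p ≠ 0) (t : ℝ) : smoothAbsRpow p 0 t = |t| ^ p := by
  simp [smoothAbsRpow, sq_rpow_div_two, hp]

theorem nonneg (hp : 0 ≤ p) (t : ℝ) : 0 ≤ smoothAbsRpow p ε t :=
  sub_nonneg.2 <| rpow_le_rpow (sq_nonneg ε) (by nlinarith) (by linarith)

theorem continuous_uncurry (hp : 0 < p) : Continuous fun q : ℝ × ℝ ↦ smoothAbsRpow p q.1 q.2 := by
  unfold smoothAbsRpow
  have hp2 : 0 ≤ p / 2 := by positivity
  exact (((continuous_snd.pow 2).add (continuous_fst.pow 2)).rpow_const fun _ ↦ Or.inr hp2).sub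
    ((continuous_fst.pow 2).rpow_const fun _ ↦ Or.inr hp2)

theorem contDiff {k : WithTop ℕ∞} (hε : ε ≠ 0) : ContDiff ℝ k (smoothAbsRpow p ε) :=
  ((contDiff_id.pow 2).add contDiff_const).rpow_const_of_ne (fun t ↦ by positivity) |>.sub
    contDiff_const

theorem hasDerivAt (hε : ε ≠ 0) (t : ℝ) :
    HasDerivAt (smoothAbsRpow p ε) (p * t * (t ^ 2 + ε ^ 2) ^ (p / 2 - 1)) t := by
  have h := (((hasDerivAt_pow 2 t).add_const (ε ^ 2)).rpow_const
    (p := p / 2) (Or.inl (by positivity))).sub_const ((ε ^ 2) ^ (p / 2))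
  refine h.congr_deriv ?_
  push_cast
  ring

theorem abs_deriv_le (hp : 0 ≤ p) (hε : ε ≠ 0) (t : ℝ) :
    |p * t * (t ^ 2 + ε ^ 2) ^ (p / 2 - 1)| ≤ p * (t ^ 2 + ε ^ 2) ^ ((p - 1) / 2) := by
  have hs : 0 < t ^ 2 + ε ^ 2 := by positivity
  have ht : |t| ≤ (t ^ 2 + ε ^ 2) ^ (1 / 2 : ℝ) := by
    rw [← rpow_one |t|, ← sq_rpow_div_two]
    exact rpow_le_rpow (sq_nonneg t) (by nlinarith) (by norm_num)
  calc |p * t * (t ^ 2 + ε ^ 2) ^ (p / 2 - 1)|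
      = p * (|t| * (t ^ 2 + ε ^ 2) ^ (p / 2 - 1)) := by
        rw [abs_mul, abs_mul, abs_of_nonneg hp, abs_of_pos (rpow_pos_of_pos hs _), mul_assoc]
    _ ≤ p * ((t ^ 2 + ε ^ 2) ^ (1 / 2 : ℝ) * (t ^ 2 + ε ^ 2) ^ (p / 2 - 1)) := by gcongr
    _ = p * (t ^ 2 + ε ^ 2) ^ ((p - 1) / 2) := by rw [← rpow_add hs]; ring_nf

theorem abs_fderiv_comp_apply_le {E : Type*} [NormedAddCommGroup E] [NormedSpace ℝ E]
    {u : E → ℝ} {x : E} (hp : 0 ≤ p) (hε : ε ≠ 0) (hu : DifferentiableAt ℝ u x) (v : E) :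
    |fderiv ℝ (fun y ↦ smoothAbsRpow p ε (u y)) x v| ≤
      p * (u x ^ 2 + ε ^ 2) ^ ((p - 1) / 2) * (‖fderiv ℝ u x‖ * ‖v‖) := by
  have hD : fderiv ℝ (fun y ↦ smoothAbsRpow p ε (u y)) x =
      (p * u x * (u x ^ 2 + ε ^ 2) ^ (p / 2 - 1)) • fderiv ℝ u x :=
    ((hasDerivAt hε (u x)).comp_hasFDerivAt x hu.hasFDerivAt).fderiv
  rw [hD, smul_apply, smul_eq_mul, abs_mul]
  exact mul_le_mul (abs_deriv_le hp hε _) ((fderiv ℝ u x).le_opNorm v) (abs_nonneg _)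
    (by positivity)

end smoothAbsRpow

section Interpolation

variable {α : Type*} [MeasurableSpace α] {μ : Measure α}

theorem integral_rpow_mul_rpow_le {f g : α → ℝ} (hf : Integrable f μ) (hg : Integrable g μ)
    (hf0 : 0 ≤ f) (hg0 : 0 ≤ g) {s t : ℝ} (hs : 0 ≤ s) (ht : 0 ≤ t) (hst : s + t = 1) :
    ∫ x, f x ^ s * g x ^ t ∂μ ≤ (∫ x, f x ∂μ) ^ s * (∫ x, g x ∂μ) ^ t := by
  have hfin : ∀ {h : α → ℝ}, Integrable h μ → ∫⁻ x, ENNReal.ofReal (h x) ∂μ ≠ ⊤ :=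
    fun hh ↦ hh.lintegral_lt_top.ne
  have hmeas : AEStronglyMeasurable (fun x ↦ f x ^ s * g x ^ t) μ :=
    ((hf.aemeasurable.pow_const s).mul (hg.aemeasurable.pow_const t)).aestronglyMeasurable
  have hlin := ENNReal.lintegral_mul_norm_pow_le hf.aemeasurable.ennreal_ofReal
    hg.aemeasurable.ennreal_ofReal hs ht hst
  have hfg0 : ∀ x, 0 ≤ f x ^ s * g x ^ t := fun x ↦
    mul_nonneg (rpow_nonneg (hf0 x) s) (rpow_nonneg (hg0 x) t)
  rw [integral_eq_lintegral_of_nonneg_ae (.of_forall hfg0) hmeas,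
    integral_eq_lintegral_of_nonneg_ae (.of_forall hf0) hf.aestronglyMeasurable,
    integral_eq_lintegral_of_nonneg_ae (.of_forall hg0) hg.aestronglyMeasurable,
    ENNReal.toReal_rpow, ENNReal.toReal_rpow, ← ENNReal.toReal_mul]
  refine ENNReal.toReal_mono (ENNReal.mul_ne_top (ENNReal.rpow_ne_top_of_nonneg hs (hfin hf))
    (ENNReal.rpow_ne_top_of_nonneg ht (hfin hg))) (le_of_eq_of_le ?_ hlin)
  refine lintegral_congr fun x ↦ ?_
  rw [ENNReal.ofReal_mul (rpow_nonneg (hf0 x) s), ENNReal.ofReal_rpow_of_nonneg (hf0 x) hs,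
    ENNReal.ofReal_rpow_of_nonneg (hg0 x) ht]

end Interpolation

theorem mul_rpow_le_of_mul_le_rpow_mul_rpow {A B c q : ℝ} (hA : 0 ≤ A) (hB : 0 ≤ B) (hq : q ≠ 0)
    (h : c * A ≤ A ^ (1 - q) * B ^ q) : c * A ^ q ≤ B ^ q := by
  rcases hA.eq_or_lt with rfl | hA
  · rw [zero_rpow hq, mul_zero]
    exact rpow_nonneg hB q
  have hsplit : A = A ^ (1 - q) * A ^ q := by rw [← rpow_add hA, sub_add_cancel, rpow_one]
  refine le_of_mul_le_mul_left ?_ (rpow_pos_of_pos hA (1 - q))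
  calc A ^ (1 - q) * (c * A ^ q) = c * (A ^ (1 - q) * A ^ q) := by ring
    _ = c * A := by rw [← hsplit]
    _ ≤ _ := h

theorem rpow_add_one_mul_eq_rpow_mul_rpow {r s t a p : ℝ} (hr : 0 < r) (hs : 0 ≤ s) (ht : 0 ≤ t)
    (hp : p ≠ 0) :
    r ^ (a + 1) * (s ^ (p - 1) * t) =
      (r ^ a * s ^ p) ^ (1 - 1 / p) * (r ^ (a + p) * t ^ p) ^ (1 / p) := by
  rw [mul_rpow (by positivity) (by positivity), mul_rpow (by positivity) (by positivity),
    ← rpow_mul hr.le, ← rpow_mul hr.le, ← rpow_mul hs, ← rpow_mul ht, mul_mul_mul_comm,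
    ← rpow_add hr, show a * (1 - 1 / p) + (a + p) * (1 / p) = a + 1 by field_simp; ring,
    show p * (1 - 1 / p) = p - 1 by field_simp, mul_one_div_cancel hp, rpow_one]

section Hardy

variable {E : Type*} [NormedAddCommGroup E] [InnerProductSpace ℝ E] [FiniteDimensional ℝ E]
  [MeasurableSpace E] [BorelSpace E] {μ : Measure E} [μ.IsAddHaarMeasure]

theorem integral_rpow_norm_mul_fderiv_apply_self {g : E → ℝ} (hg : ContDiff ℝ 1 g)
    (hgs : HasCompactSupport g) (h0 : (0 : E) ∉ tsupport g) (a : ℝ) :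
    ∫ x, ‖x‖ ^ a * fderiv ℝ g x x ∂μ = -(a + finrank ℝ E) * ∫ x, ‖x‖ ^ a * g x ∂μ := by
  set c : E → ℝ := fun x ↦ ‖x‖ ^ a * g x
  have hc : ContDiff ℝ 1 c := hg.rpow_norm_mul h0 a
  have hcs : HasCompactSupport c := hgs.mul_left
  have hc_int : Integrable c μ := hg.continuous.integrable_rpow_norm_mul hgs h0 a
  have hDc_int : Integrable (fun x ↦ fderiv ℝ c x x) μ :=
    ((hc.continuous_fderiv one_ne_zero).clm_apply continuous_id).integrable_of_hasCompactSupport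
      ((hcs.fderiv ℝ).mono fun x hx h ↦ hx (by simp [h]))
  have hderiv : ∀ x, fderiv ℝ c x x = a * c x + ‖x‖ ^ a * fderiv ℝ g x x := by
    intro x
    rcases eq_or_ne x 0 with rfl | hx
    · simp [c, image_eq_zero_of_notMem_tsupport h0]
    · exact fderiv_rpow_norm_mul_apply_self hx (hg.differentiable one_ne_zero x) a
  have h := integral_fderiv_apply_self (μ := μ) hc hcs
  have hR_int : Integrable (fun x ↦ ‖x‖ ^ a * fderiv ℝ g x x) μ :=
    (hDc_int.sub (hc_int.const_mul a)).congr (.of_forall fun x ↦ by simp [hderiv x])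
  simp_rw [hderiv] at h
  rw [integral_add (hc_int.const_mul a) hR_int, integral_const_mul] at h
  linear_combination h

variable {u : E → ℝ} {p δ : ℝ}

theorem abs_mul_integral_smoothAbsRpow_le (hp : 0 < p) (hu : ContDiff ℝ 1 u)
    (hus : HasCompactSupport u) (hu0 : (0 : E) ∉ tsupport u) {ε : ℝ} (hε : ε ≠ 0) :
    |δ| * ∫ x, ‖x‖ ^ (-p * δ - finrank ℝ E) * smoothAbsRpow p ε (u x) ∂μ ≤
      ∫ x, ‖x‖ ^ (-p * δ - finrank ℝ E + 1) *
        ((u x ^ 2 + ε ^ 2) ^ ((p - 1) / 2) * ‖fderiv ℝ u x‖) ∂μ := by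
  set a := -p * δ - finrank ℝ E
  set g : E → ℝ := fun x ↦ smoothAbsRpow p ε (u x)
  set Z : E → ℝ := fun x ↦ ‖x‖ ^ (a + 1) * ((u x ^ 2 + ε ^ 2) ^ ((p - 1) / 2) * ‖fderiv ℝ u x‖)
  have hg : ContDiff ℝ 1 g := (smoothAbsRpow.contDiff hε).comp hu
  have hg0 : (0 : E) ∉ tsupport g := fun h ↦ hu0 (tsupport_comp_subset smoothAbsRpow.apply_zero u h)
  have hZ_int : Integrable Z μ := by
    have hcont : Continuous fun x ↦ (u x ^ 2 + ε ^ 2) ^ ((p - 1) / 2) * ‖fderiv ℝ u x‖ :=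
      ((Continuous.rpow_const (f := fun x ↦ u x ^ 2 + ε ^ 2) (by fun_prop)
        fun x ↦ Or.inl (by positivity))).mul (hu.continuous_fderiv one_ne_zero).norm
    have hsupp : tsupport (fun x ↦ ‖fderiv ℝ u x‖) ⊆ tsupport u :=
      (tsupport_comp_subset (g := norm) norm_zero (fderiv ℝ u)).trans (tsupport_fderiv_subset ℝ)
    exact hcont.integrable_rpow_norm_mul (hus.fderiv ℝ).norm.mul_left
      (fun h ↦ hu0 (hsupp (tsupport_mul_subset_right h))) (a + 1)
  have hbound : ∀ x, ‖‖x‖ ^ a * fderiv ℝ g x x‖ ≤ p * Z x := by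
    intro x
    rcases eq_or_ne x 0 with rfl | hx
    · simp only [map_zero, mul_zero, norm_zero]
      positivity
    calc ‖‖x‖ ^ a * fderiv ℝ g x x‖
        = ‖x‖ ^ a * |fderiv ℝ g x x| := by
          rw [Real.norm_eq_abs, abs_mul, abs_of_nonneg (by positivity)]
      _ ≤ ‖x‖ ^ a * (p * (u x ^ 2 + ε ^ 2) ^ ((p - 1) / 2) * (‖fderiv ℝ u x‖ * ‖x‖)) := by
          gcongr
          exact smoothAbsRpow.abs_fderiv_comp_apply_le hp.le hε
            ((hu.differentiable one_ne_zero) x) x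
      _ = p * Z x := by
          simp only [Z, rpow_add_one (norm_ne_zero_iff.2 hx)]
          ring
  have hI0 : 0 ≤ ∫ x, ‖x‖ ^ a * g x ∂μ :=
    integral_nonneg fun x ↦ mul_nonneg (by positivity) (smoothAbsRpow.nonneg hp.le _)
  have hident := integral_rpow_norm_mul_fderiv_apply_self (μ := μ) hg
    (hus.comp_left smoothAbsRpow.apply_zero) hg0 a
  have key : p * (|δ| * ∫ x, ‖x‖ ^ a * g x ∂μ) ≤ p * ∫ x, Z x ∂μ := by
    calc p * (|δ| * ∫ x, ‖x‖ ^ a * g x ∂μ) = ‖∫ x, ‖x‖ ^ a * fderiv ℝ g x x ∂μ‖ := by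
          rw [hident, show -(a + finrank ℝ E) = p * δ by ring, Real.norm_eq_abs, abs_mul,
            abs_mul, abs_of_pos hp, abs_of_nonneg hI0]
          ring
      _ ≤ ∫ x, p * Z x ∂μ := norm_integral_le_of_norm_le (hZ_int.const_mul p) (.of_forall hbound)
      _ = p * ∫ x, Z x ∂μ := integral_const_mul p _
  exact le_of_mul_le_mul_left key hp

theorem abs_mul_integral_abs_rpow_le (hp : 1 ≤ p) (hu : ContDiff ℝ 1 u)
    (hus : HasCompactSupport u) (hu0 : (0 : E) ∉ tsupport u) :
    |δ| * ∫ x, ‖x‖ ^ (-p * δ - finrank ℝ E) * |u x| ^ p ∂μ ≤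
      ∫ x, ‖x‖ ^ (-p * δ - finrank ℝ E + 1) * (|u x| ^ (p - 1) * ‖fderiv ℝ u x‖) ∂μ := by
  have hp0 : 0 < p := by linarith
  have hIc : Continuous (uncurry fun ε x ↦ smoothAbsRpow p ε (u x)) :=
    (smoothAbsRpow.continuous_uncurry hp0).comp
      (continuous_fst.prodMk (hu.continuous.comp continuous_snd))
  have hJc : Continuous
      (uncurry fun (ε : ℝ) x ↦ (u x ^ 2 + ε ^ 2) ^ ((p - 1) / 2) * ‖fderiv ℝ u x‖) :=
    (Continuous.rpow_const (f := fun q : ℝ × E ↦ u q.2 ^ 2 + q.1 ^ 2) (by fun_prop)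
      fun _ ↦ Or.inr (by linarith)).mul
      ((hu.continuous_fderiv one_ne_zero).comp continuous_snd).norm
  have hI := continuous_integral_rpow_norm_mul (μ := μ) hIc hus hu0
    (fun _ _ hx ↦ by simp [image_eq_zero_of_notMem_tsupport hx]) (-p * δ - finrank ℝ E)
  have hJ := continuous_integral_rpow_norm_mul (μ := μ) hJc hus hu0
    (fun _ _ hx ↦ by simp [fderiv_of_notMem_tsupport ℝ hx]) (-p * δ - finrank ℝ E + 1)
  have hlim := le_of_tendsto_of_tendsto
    (((hI.tendsto 0).const_mul |δ|).mono_left nhdsWithin_le_nhds)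
    ((hJ.tendsto 0).mono_left (nhdsWithin_le_nhds (s := {0}ᶜ)))
    (eventually_nhdsWithin_of_forall fun _ hε ↦
      abs_mul_integral_smoothAbsRpow_le hp0 hu hus hu0 hε)
  simpa [smoothAbsRpow.zero_eps hp0.ne', sq_rpow_div_two] using hlim

theorem weighted_hardy_inequality (hp : 1 ≤ p) (hδ : δ ≠ 0) (hu : ContDiff ℝ 1 u)
    (hus : HasCompactSupport u) (hu0 : (0 : E) ∉ tsupport u) :
    (∫ x, ‖x‖ ^ (-p * δ - finrank ℝ E) * |u x| ^ p ∂μ) ^ (1 / p) ≤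
      (1 / |δ|) * (∫ x, ‖x‖ ^ (-p * (δ - 1) - finrank ℝ E) * ‖fderiv ℝ u x‖ ^ p ∂μ) ^ (1 / p) := by
  have hp0 : 0 < p := by linarith
  rw [show -p * (δ - 1) - (finrank ℝ E : ℝ) = -p * δ - finrank ℝ E + p by ring]
  set a := -p * δ - finrank ℝ E
  set f : E → ℝ := fun x ↦ ‖x‖ ^ a * |u x| ^ p
  set g : E → ℝ := fun x ↦ ‖x‖ ^ (a + p) * ‖fderiv ℝ u x‖ ^ p
  have hf : Integrable f μ := by
    have h0 : (0 : E) ∉ tsupport fun x ↦ |u x| ^ p := fun h ↦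
      hu0 (tsupport_comp_subset (g := fun t : ℝ ↦ |t| ^ p) (by simp [hp0.ne']) u h)
    exact (hu.continuous.abs.rpow_const fun _ ↦ Or.inr hp0.le).integrable_rpow_norm_mul
      (hus.abs.comp_left (g := fun t : ℝ ↦ t ^ p) (zero_rpow hp0.ne')) h0 a
  have hg : Integrable g μ := by
    have h0 : (0 : E) ∉ tsupport fun x ↦ ‖fderiv ℝ u x‖ ^ p := fun h ↦
      hu0 (tsupport_fderiv_subset ℝ (tsupport_comp_subset (g := fun L : E →L[ℝ] ℝ ↦ ‖L‖ ^ p)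
        (by simp [hp0.ne']) (fderiv ℝ u) h))
    exact ((hu.continuous_fderiv one_ne_zero).norm.rpow_const fun _ ↦ Or.inr hp0.le
      ).integrable_rpow_norm_mul
        ((hus.fderiv ℝ).norm.comp_left (g := fun t : ℝ ↦ t ^ p) (zero_rpow hp0.ne')) h0 _
  have hsplit : ∀ x, ‖x‖ ^ (a + 1) * (|u x| ^ (p - 1) * ‖fderiv ℝ u x‖) =
      f x ^ (1 - 1 / p) * g x ^ (1 / p) := by
    intro x
    rcases eq_or_ne x 0 with rfl | hx
    · simp [f, g, image_eq_zero_of_notMem_tsupport hu0, fderiv_of_notMem_tsupport ℝ hu0, hp0.ne']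
    · exact rpow_add_one_mul_eq_rpow_mul_rpow (norm_pos_iff.2 hx) (abs_nonneg _) (norm_nonneg _)
        hp0.ne'
  have hholder : |δ| * ∫ x, f x ∂μ ≤ (∫ x, f x ∂μ) ^ (1 - 1 / p) * (∫ x, g x ∂μ) ^ (1 / p) := by
    refine (abs_mul_integral_abs_rpow_le hp hu hus hu0).trans
      (le_of_eq_of_le (integral_congr_ae (.of_forall hsplit)) ?_)
    exact integral_rpow_mul_rpow_le hf hg (fun x ↦ by positivity) (fun x ↦ by positivity)
      (by rw [sub_nonneg, div_le_one hp0]; exact hp) (by positivity) (by ring)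
  have key := mul_rpow_le_of_mul_le_rpow_mul_rpow (integral_nonneg fun x ↦ by positivity)
    (integral_nonneg fun x ↦ by positivity) (one_div_ne_zero hp0.ne') hholder
  rw [one_div_mul_eq_div, le_div_iff₀ (abs_pos.2 hδ), mul_comm]
  exact key

end Hardy

theorem weighted_hardy_punctured_ball_general
    (p δ : ℝ) (hp : 1 ≤ p) (hδ : δ ≠ 0)
    (u : E3 → ℝ)
    (hsmooth : ContDiffOn ℝ (⊤ : ℕ∞) u {x : E3 | x ≠ 0})
    (hsupp : tsupport u ⊆ Metric.closedBall (0 : E3) 1 \ {0}) :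
    (∫ x in Metric.ball (0 : E3) 1, ‖x‖ ^ (-p * δ - 3) * |u x| ^ p) ^ (1 / p) ≤
      (1 / |δ|) *
        (∫ x in Metric.ball (0 : E3) 1,
          ‖x‖ ^ (-p * (δ - 1) - 3) * ‖fderiv ℝ u x‖ ^ p) ^ (1 / p) := by
  have hp0 : p ≠ 0 := by positivity
  have hu0 : (0 : E3) ∉ tsupport u := fun h ↦ (hsupp h).2 rfl
  have hball : tsupport u ⊆ Metric.closedBall 0 1 := hsupp.trans sdiff_subset
  have hu : ContDiff ℝ 1 u :=
    (hsmooth.contDiff_of_notMem_tsupport hu0).of_le (by exact_mod_cast le_top)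
  have hus : HasCompactSupport u :=
    (isCompact_closedBall 0 1).of_isClosed_subset (isClosed_tsupport u) hball
  have hsu := hu.continuous.support_subset_ball one_ne_zero hball
  have hsDu := (hu.continuous_fderiv one_ne_zero).support_subset_ball one_ne_zero
    ((tsupport_fderiv_subset ℝ).trans hball)
  rw [setIntegral_eq_integral_of_forall_compl_eq_zero fun x hx ↦ by
      simp [notMem_support.1 fun h ↦ hx (hsu h), hp0],
    setIntegral_eq_integral_of_forall_compl_eq_zero fun x hx ↦ by
      simp [notMem_support.1 fun h ↦ hx (hsDu h), hp0]]
  simpa [finrank_euclideanSpace_fin] using weighted_hardy_inequality (μ := volume) hp hδ hu hus hu0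

/-- **weighted Hardy inequality on the punctured ball.** For every `δ ≠ 0`
and every smooth function `u` on `B \ {0} ⊂ ℝ³` with compact support in `B̄ \ {0}`
(requiring `u ≡ 0` on `∂B` only when `δ < 0`), one has
`‖u‖_{L^p_{ρ,δ}} ≤ (1/|δ|) ‖∇u‖_{L^p_{ρ,δ−1}}`, where
`‖u‖_{L^p_{ρ,δ}}^p = ∫ |ρ^{−δ−3/p} u|^p dv = ∫ ρ^{−pδ−3} |u|^p dv`. -/
theorem weighted_hardy_punctured_ball
    (p δ : ℝ) (hp : 1 ≤ p) (hδ : δ ≠ 0)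
    (u : E3 → ℝ)
    (hsmooth : ContDiffOn ℝ (⊤ : ℕ∞) u {x : E3 | x ≠ 0})
    (hsupp : tsupport u ⊆ Metric.closedBall (0 : E3) 1 \ {0})
    (hbdry : δ < 0 → ∀ x : E3, ‖x‖ = 1 → u x = 0) :
    (∫ x in Metric.ball (0 : E3) 1, ‖x‖ ^ (-p * δ - 3) * |u x| ^ p) ^ (1 / p) ≤
      (1 / |δ|) *
        (∫ x in Metric.ball (0 : E3) 1,
          ‖x‖ ^ (-p * (δ - 1) - 3) * ‖fderiv ℝ u x‖ ^ p) ^ (1 / p) :=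
  weighted_hardy_punctured_ball_general p δ hp hδ u hsmooth hsupp

end
end

section
/- Weighted Poincaré inequality on an exterior domain: let U = ℝ² \ B̄_R and ω = √(1+r²). For every δ ≠ 0 there is C = C(R) such that ‖ω^{−(δ+1)} u‖_{L²} ≤ (C/|δ|) ‖ω^{−δ} ∇u‖_{L²} for all smooth compactly supported functions u on Ū (requiring u|_{∂U} = 0 when δ > 0). -/
/-!
Write `ω r = √(1 + r²)`. On a ray `r ↦ r • θ` with `f r = u (r • θ)`, the fundamental theorem of
calculus for `ω^{-2δ} f²` on `(R, ∞)` gives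
`δ² ∫ r ω^{-2δ-2} f² = δ ∫ ω^{-2δ} f f' + δ ω(R)^{-2δ} f(R)² / 2`, and the boundary term is `≤ 0`:
it vanishes for `δ > 0` by the boundary condition and has the sign of `δ` otherwise.
Young's inequality, with `ω r ≤ C r` for `r > R` and `C = √(1 + R²) / R`, bounds the cross term
by `δ² ∫ r ω^{-2δ-2} f² / 2 + C² ∫ r ω^{-2δ} f'² / 2`, hence
`δ² ∫ r ω^{-2δ-2} f² ≤ C² ∫ r ω^{-2δ} f'²`. Since `|f'| ≤ |∇u|` and the plane measure is
`r dr dθ` in polar coordinates, integrating over the directions `θ` gives the claim.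
-/

open Real MeasureTheory

noncomputable section

abbrev E2 := EuclideanSpace ℝ (Fin 2)

open Set Filter Topology Metric

theorem HasCompactSupport.mono_of_eq_zero {α β γ : Type*} [TopologicalSpace α] [Zero β]
    [Zero γ] {k : α → β} {g : α → γ} (hk : HasCompactSupport k)
    (h : ∀ x, k x = 0 → g x = 0) :
    HasCompactSupport g :=
  hk.mono (Function.support_subset_iff'.2 fun x hx => h x (Function.notMem_support.1 hx))

namespace MeasureTheory.Measure

variable {E : Type*} [NormedAddCommGroup E] [NormedSpace ℝ E] [FiniteDimensional ℝ E]
  [MeasurableSpace E] [BorelSpace E]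

theorem integral_volumeIoiPow (n : ℕ) (g : ℝ → ℝ) :
    ∫ r, g r ∂volumeIoiPow n = ∫ r in Ioi (0 : ℝ), r ^ n * g r := by
  rw [volumeIoiPow, integral_withDensity_eq_integral_toReal_smul₀ (by fun_prop) (by simp),
    integral_subtype_comap measurableSet_Ioi (fun r => (ENNReal.ofReal (r ^ n)).toReal • g r)]
  refine setIntegral_congr_fun measurableSet_Ioi fun r hr => ?_
  simp [ENNReal.toReal_ofReal (pow_nonneg (le_of_lt hr) n)]

theorem integrable_and_integral_eq_integral_sphere [Nontrivial E] (μ : Measure E)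
    [μ.IsAddHaarMeasure] {f : E → ℝ} (hf : Integrable f μ) :
    Integrable (fun θ : sphere (0 : E) 1 =>
        ∫ r in Ioi (0 : ℝ), r ^ (Module.finrank ℝ E - 1) * f (r • (θ : E))) μ.toSphere ∧
      ∫ x, f x ∂μ = ∫ θ : sphere (0 : E) 1,
        (∫ r in Ioi (0 : ℝ), r ^ (Module.finrank ℝ E - 1) * f (r • (θ : E)))
          ∂μ.toSphere := by
  have hmp := μ.measurePreserving_homeomorphUnitSphereProd
  set g : sphere (0 : E) 1 × Ioi (0 : ℝ) → ℝ := fun p => f ((p.2 : ℝ) • (p.1 : E))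
  have hg : ∀ x : ({0}ᶜ : Set E), g (homeomorphUnitSphereProd E x) = f x := fun x => by
    simp [g, smul_smul, mul_inv_cancel₀ (norm_ne_zero_iff.2 x.2)]
  have hint : Integrable g (μ.toSphere.prod (volumeIoiPow (Module.finrank ℝ E - 1))) := by
    rw [← hmp.integrable_comp_emb (Homeomorph.measurableEmbedding _), Function.comp_def,
      funext hg, ← Function.comp_def f, ← integrableOn_iff_comap_subtypeVal
        (measurableSet_singleton 0).compl]
    exact hf.integrableOn
  have hslice (θ : sphere (0 : E) 1) :
      ∫ r, g (θ, r) ∂volumeIoiPow (Module.finrank ℝ E - 1) =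
        ∫ r in Ioi (0 : ℝ), r ^ (Module.finrank ℝ E - 1) * f (r • (θ : E)) :=
    integral_volumeIoiPow _ fun r => f (r • (θ : E))
  refine ⟨by simpa only [hslice] using hint.integral_prod_left, ?_⟩
  calc ∫ x, f x ∂μ = ∫ x : ({0}ᶜ : Set E), f x ∂μ.comap (↑) := by
        rw [integral_subtype_comap (measurableSet_singleton 0).compl, restrict_compl_singleton]
    _ = ∫ p, g p ∂μ.toSphere.prod (volumeIoiPow (Module.finrank ℝ E - 1)) := by
        simp_rw [← hg]
        exact hmp.integral_comp (Homeomorph.measurableEmbedding _) g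
    _ = _ := by simp_rw [integral_prod g hint, hslice]

theorem integrable_and_setIntegral_norm_gt_eq_integral_sphere [Nontrivial E] (μ : Measure E)
    [μ.IsAddHaarMeasure] {R : ℝ} (hR : 0 ≤ R) {f : E → ℝ}
    (hf : IntegrableOn f {x | R < ‖x‖} μ) :
    Integrable (fun θ : sphere (0 : E) 1 =>
        ∫ r in Ioi R, r ^ (Module.finrank ℝ E - 1) * f (r • (θ : E))) μ.toSphere ∧
      ∫ x in {x | R < ‖x‖}, f x ∂μ = ∫ θ : sphere (0 : E) 1,
        (∫ r in Ioi R, r ^ (Module.finrank ℝ E - 1) * f (r • (θ : E))) ∂μ.toSphere := by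
  have hS : MeasurableSet {x : E | R < ‖x‖} := measurableSet_lt measurable_const measurable_norm
  have hslice (θ : sphere (0 : E) 1) :
      ∫ r in Ioi (0 : ℝ),
          r ^ (Module.finrank ℝ E - 1) * {x | R < ‖x‖}.indicator f (r • (θ : E)) =
        ∫ r in Ioi R, r ^ (Module.finrank ℝ E - 1) * f (r • (θ : E)) := by
    rw [← Ioi_inter_Ioi.trans (congrArg Ioi (max_eq_right hR)),
      ← setIntegral_indicator measurableSet_Ioi]
    refine setIntegral_congr_fun measurableSet_Ioi fun r (hr : 0 < r) => ?_
    by_cases hrR : R < r <;> simp [indicator, norm_smul, abs_of_pos hr, hrR]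
  rw [← integral_indicator hS]
  simpa only [hslice] using
    integrable_and_integral_eq_integral_sphere μ (hf.integrable_indicator hS)

end MeasureTheory.Measure

theorem integral_Ioi_deriv_mul_sq_eq {g g' f f' : ℝ → ℝ} (hg : ∀ r, HasDerivAt g (g' r) r)
    (hf : ∀ r, HasDerivAt f (f' r) r) (hg' : Continuous g') (hf' : Continuous f')
    (hfc : HasCompactSupport f) (R : ℝ) :
    ∫ r in Ioi R, (g' r * f r ^ 2 + 2 * g r * f r * f' r) = -(g R * f R ^ 2) := by
  have := continuous_iff_continuousAt.2 fun r => (hg r).continuousAt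
  have := continuous_iff_continuousAt.2 fun r => (hf r).continuousAt
  have hderiv (r : ℝ) : HasDerivAt (fun r => g r * f r ^ 2)
      (g' r * f r ^ 2 + 2 * g r * f r * f' r) r := by
    refine ((hg r).fun_mul ((hf r).fun_pow 2)).congr_deriv ?_
    norm_num
    ring
  have hint : Integrable fun r => g' r * f r ^ 2 + 2 * g r * f r * f' r :=
    (by fun_prop : Continuous _).integrable_of_hasCompactSupport
      (hfc.mono_of_eq_zero fun r hr => by simp [hr])
  have hlim : Tendsto (fun r => g r * f r ^ 2) atTop (𝓝 0) :=
    (hfc.mono_of_eq_zero fun r hr => by simp [hr]).is_zero_at_infty.mono_left atTop_le_cocompact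
  rw [integral_Ioi_of_hasDerivAt_of_tendsto' (fun r _ => hderiv r) hint.integrableOn hlim, zero_sub]

theorem hasDerivAt_one_add_sq_rpow (s r : ℝ) :
    HasDerivAt (fun r : ℝ => (1 + r ^ 2) ^ s) (2 * s * r * (1 + r ^ 2) ^ (s - 1)) r := by
  have h := ((hasDerivAt_pow 2 r).const_add 1).rpow_const (p := s) (Or.inl (by positivity))
  exact h.congr_deriv (by push_cast; ring)

theorem continuous_one_add_sq_rpow (s : ℝ) : Continuous fun r : ℝ => (1 + r ^ 2) ^ s :=
  continuous_iff_continuousAt.2 fun r => (hasDerivAt_one_add_sq_rpow s r).continuousAt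

theorem one_add_sq_div_le {R r : ℝ} (hR : 0 < R) (hr : R < r) :
    (1 + r ^ 2) / r ≤ (1 + R ^ 2) / R ^ 2 * r := by
  have hr0 : 0 < r := hR.trans hr
  rw [div_le_iff₀ hr0, div_mul_eq_mul_div, div_mul_eq_mul_div, le_div_iff₀ (by positivity)]
  nlinarith [mul_lt_mul hr hr.le hR hr0.le]

theorem mul_one_add_sq_rpow_le {R r : ℝ} (hR : 0 < R) (hr : R < r) (δ a b : ℝ) :
    δ * ((1 + r ^ 2) ^ (-δ) * (a * b)) ≤
      δ ^ 2 / 2 * (r * (1 + r ^ 2) ^ (-δ - 1) * a ^ 2) +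
        (1 + R ^ 2) / R ^ 2 / 2 * (r * (1 + r ^ 2) ^ (-δ) * b ^ 2) := by
  have hr0 : 0 < r := hR.trans hr
  have hw : 0 < 1 + r ^ 2 := by positivity
  have amgm : δ * (a * b) ≤
      δ ^ 2 / 2 * (r / (1 + r ^ 2) * a ^ 2) + (1 + r ^ 2) / r / 2 * b ^ 2 := by
    field_simp
    nlinarith [sq_nonneg (δ * r * a - (1 + r ^ 2) * b)]
  have key : δ * (a * b) ≤
      δ ^ 2 / 2 * (r / (1 + r ^ 2) * a ^ 2) + (1 + R ^ 2) / R ^ 2 / 2 * (r * b ^ 2) := by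
    nlinarith [amgm, one_add_sq_div_le hR hr, sq_nonneg b]
  rw [rpow_sub_one hw.ne']
  calc δ * ((1 + r ^ 2) ^ (-δ) * (a * b)) = (1 + r ^ 2) ^ (-δ) * (δ * (a * b)) := by ring
    _ ≤ (1 + r ^ 2) ^ (-δ) * (δ ^ 2 / 2 * (r / (1 + r ^ 2) * a ^ 2) +
          (1 + R ^ 2) / R ^ 2 / 2 * (r * b ^ 2)) :=
        mul_le_mul_of_nonneg_left key (rpow_pos_of_pos hw (-δ)).le
    _ = _ := by ring

theorem weighted_poincare_Ioi {R : ℝ} (hR : 0 < R) (δ : ℝ) {f f' : ℝ → ℝ}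
    (hf : ∀ r, HasDerivAt f (f' r) r) (hf' : Continuous f') (hfc : HasCompactSupport f)
    (hfR : 0 < δ → f R = 0) :
    δ ^ 2 * ∫ r in Ioi R, r * (1 + r ^ 2) ^ (-δ - 1) * f r ^ 2 ≤
      (1 + R ^ 2) / R ^ 2 * ∫ r in Ioi R, r * (1 + r ^ 2) ^ (-δ) * f' r ^ 2 := by
  have := continuous_iff_continuousAt.2 fun r => (hf r).continuousAt
  have := continuous_one_add_sq_rpow (-δ)
  have := continuous_one_add_sq_rpow (-δ - 1)
  have hf'c : HasCompactSupport f' := by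
    simpa only [funext fun r => (hf r).deriv] using hfc.deriv
  have hA : IntegrableOn (fun r => r * (1 + r ^ 2) ^ (-δ - 1) * f r ^ 2) (Ioi R) :=
    ((by fun_prop : Continuous _).integrable_of_hasCompactSupport
      (hfc.mono_of_eq_zero fun r hr => by simp [hr])).integrableOn
  have hB : IntegrableOn (fun r => r * (1 + r ^ 2) ^ (-δ) * f' r ^ 2) (Ioi R) :=
    ((by fun_prop : Continuous _).integrable_of_hasCompactSupport
      (hf'c.mono_of_eq_zero fun r hr => by simp [hr])).integrableOn
  have hT : IntegrableOn (fun r => (1 + r ^ 2) ^ (-δ) * (f r * f' r)) (Ioi R) :=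
    ((by fun_prop : Continuous _).integrable_of_hasCompactSupport
      (hfc.mono_of_eq_zero fun r hr => by simp [hr])).integrableOn
  have hibp : -2 * δ * (∫ r in Ioi R, r * (1 + r ^ 2) ^ (-δ - 1) * f r ^ 2) +
      2 * (∫ r in Ioi R, (1 + r ^ 2) ^ (-δ) * (f r * f' r)) =
        -((1 + R ^ 2) ^ (-δ) * f R ^ 2) := by
    rw [← integral_Ioi_deriv_mul_sq_eq (hasDerivAt_one_add_sq_rpow (-δ)) hf (by fun_prop) hf'
        hfc R, ← integral_const_mul, ← integral_const_mul,
      ← integral_add (hA.const_mul _) (hT.const_mul _)]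
    congr 1; ext r; ring
  have hamgm : δ * (∫ r in Ioi R, (1 + r ^ 2) ^ (-δ) * (f r * f' r)) ≤
      δ ^ 2 / 2 * (∫ r in Ioi R, r * (1 + r ^ 2) ^ (-δ - 1) * f r ^ 2) +
        (1 + R ^ 2) / R ^ 2 / 2 * ∫ r in Ioi R, r * (1 + r ^ 2) ^ (-δ) * f' r ^ 2 := by
    rw [← integral_const_mul, ← integral_const_mul, ← integral_const_mul,
      ← integral_add (hA.const_mul _) (hB.const_mul _)]
    exact setIntegral_mono_on (hT.const_mul δ) ((hA.const_mul _).add (hB.const_mul _))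
      measurableSet_Ioi fun r hr => mul_one_add_sq_rpow_le hR hr δ (f r) (f' r)
  have hboundary : δ * ((1 + R ^ 2) ^ (-δ) * f R ^ 2) ≤ 0 := by
    rcases le_or_gt δ 0 with hδ | hδ
    · exact mul_nonpos_of_nonpos_of_nonneg hδ (by positivity)
    · simp [hfR hδ]
  linear_combination (-δ) * hibp + 2 * hamgm + hboundary

theorem weighted_poincare_ray {E : Type*} [NormedAddCommGroup E] [NormedSpace ℝ E] {R : ℝ}
    (hR : 0 < R) (δ : ℝ) {u : E → ℝ} (hu : ContDiff ℝ 1 u) (hsupp : HasCompactSupport u)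
    {c : E} (hc : ‖c‖ = 1) (hb : 0 < δ → u (R • c) = 0) :
    δ ^ 2 * ∫ r in Ioi R, r * (1 + r ^ 2) ^ (-δ - 1) * u (r • c) ^ 2 ≤
      (1 + R ^ 2) / R ^ 2 *
        ∫ r in Ioi R, r * (1 + r ^ 2) ^ (-δ) * ‖fderiv ℝ u (r • c)‖ ^ 2 := by
  have hray : IsClosedEmbedding fun r : ℝ => r • c :=
    isClosedEmbedding_smul_left (norm_ne_zero_iff.1 (hc ▸ one_ne_zero))
  have := hu.continuous_fderiv one_ne_zero
  have := continuous_one_add_sq_rpow (-δ)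
  have hderiv (r : ℝ) : HasDerivAt (fun r : ℝ => u (r • c)) (fderiv ℝ u (r • c) c) r :=
    ((hu.differentiable one_ne_zero) (r • c)).hasFDerivAt.comp_hasDerivAt r
      (by simpa using (hasDerivAt_id r).smul_const c)
  have hDuc : HasCompactSupport fun r : ℝ => fderiv ℝ u (r • c) :=
    (hsupp.fderiv ℝ).comp_isClosedEmbedding hray
  refine (weighted_poincare_Ioi hR δ hderiv (by fun_prop)
    (hsupp.comp_isClosedEmbedding hray) hb).trans (mul_le_mul_of_nonneg_left ?_ (by positivity))
  refine setIntegral_mono_on ?_ ?_ measurableSet_Ioi fun r hr => ?_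
  · exact ((by fun_prop : Continuous _).integrable_of_hasCompactSupport
      (hDuc.mono_of_eq_zero fun r hr => by simp [hr])).integrableOn
  · exact ((by fun_prop : Continuous _).integrable_of_hasCompactSupport
      (hDuc.mono_of_eq_zero fun r hr => by simp [hr])).integrableOn
  · have hop : |fderiv ℝ u (r • c) c| ≤ ‖fderiv ℝ u (r • c)‖ := by
      simpa [hc] using (fderiv ℝ u (r • c)).le_opNorm c
    have hw : 0 ≤ r * (1 + r ^ 2) ^ (-δ) := by have := hR.trans hr; positivity
    exact mul_le_mul_of_nonneg_left (sq_le_sq.2 (hop.trans (le_abs_self _))) hw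

theorem integrable_and_setIntegral_one_add_sq_rpow_mul_eq {R : ℝ} (hR : 0 ≤ R) (s : ℝ)
    {v : E2 → ℝ} (hv : Continuous v) (hvc : HasCompactSupport v) :
    Integrable (fun θ : sphere (0 : E2) 1 =>
        ∫ r in Ioi R, r * (1 + r ^ 2) ^ s * v (r • (θ : E2))) volume.toSphere ∧
      ∫ x in {x : E2 | R < ‖x‖}, (1 + ‖x‖ ^ 2) ^ s * v x = ∫ θ : sphere (0 : E2) 1,
        (∫ r in Ioi R, r * (1 + r ^ 2) ^ s * v (r • (θ : E2))) ∂volume.toSphere := by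
  have hint : IntegrableOn (fun x : E2 => (1 + ‖x‖ ^ 2) ^ s * v x) {x | R < ‖x‖} :=
    (((continuous_one_add_sq_rpow s).comp continuous_norm).mul hv |>.integrable_of_hasCompactSupport
      (hvc.mono_of_eq_zero fun x hx => by simp [hx])).integrableOn
  have hslice (θ : sphere (0 : E2) 1) (r : ℝ) :
      r ^ (Module.finrank ℝ E2 - 1) *
          ((1 + ‖r • (θ : E2)‖ ^ 2) ^ s * v (r • (θ : E2))) =
        r * (1 + r ^ 2) ^ s * v (r • (θ : E2)) := by
    simp [norm_smul, mul_assoc]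
  simpa only [hslice] using
    Measure.integrable_and_setIntegral_norm_gt_eq_integral_sphere volume hR hint

theorem sqrt_le_div_abs_mul_sqrt {a b c K : ℝ} (hc : c ≠ 0) (hK : 0 ≤ K)
    (h : c ^ 2 * a ≤ K ^ 2 * b) : √a ≤ K / |c| * √b := by
  rw [div_mul_eq_mul_div, le_div_iff₀ (abs_pos.2 hc), ← sqrt_sq_eq_abs,
    ← sqrt_mul' _ (sq_nonneg c), ← sqrt_sq hK, ← sqrt_mul (sq_nonneg K)]
  exact sqrt_le_sqrt (by linarith)

/-- **weighted Poincaré inequality on an exterior domain.** Let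
`U = ℝ² \ B̄_R` and `ω = √(1 + r²)`.  For every `δ ≠ 0` there is `C = C(R)` such that
`‖ω^{−(δ+1)} u‖_{L²} ≤ (C/|δ|) ‖ω^{−δ} ∇u‖_{L²}` for all smooth compactly supported
functions `u` on `Ū` (requiring `u|_{∂U} = 0` when `δ > 0`). -/
theorem weighted_poincare_exterior_domain (R : ℝ) (hR : 0 < R) :
    ∃ C > 0, ∀ δ : ℝ, δ ≠ 0 → ∀ u : E2 → ℝ,
      ContDiff ℝ (⊤ : ℕ∞) u → HasCompactSupport u →
      (0 < δ → ∀ x : E2, ‖x‖ = R → u x = 0) →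
      Real.sqrt (∫ x in {x : E2 | R < ‖x‖},
          (Real.sqrt (1 + ‖x‖ ^ 2)) ^ (-(2 : ℝ) * (δ + 1)) * (u x) ^ 2) ≤
        (C / |δ|) *
          Real.sqrt (∫ x in {x : E2 | R < ‖x‖},
            (Real.sqrt (1 + ‖x‖ ^ 2)) ^ (-(2 : ℝ) * δ) * ‖fderiv ℝ u x‖ ^ 2) := by
  refine ⟨√(1 + R ^ 2) / R, by positivity, fun δ hδ u hu hsupp hb => ?_⟩
  have hu1 : ContDiff ℝ 1 u := hu.of_le (by exact_mod_cast le_top)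
  have hweight (s : ℝ) (x : E2) :
      √(1 + ‖x‖ ^ 2) ^ (-(2 : ℝ) * s) = (1 + ‖x‖ ^ 2) ^ (-s) := by
    rw [sqrt_eq_rpow, ← rpow_mul (by positivity)]
    ring_nf
  simp_rw [hweight, neg_add']
  obtain ⟨hAint, hA⟩ := integrable_and_setIntegral_one_add_sq_rpow_mul_eq hR.le (-δ - 1)
    (v := fun x => u x ^ 2) (hu1.continuous.pow 2)
    (hsupp.mono_of_eq_zero fun x hx => by simp [hx])
  obtain ⟨hBint, hB⟩ := integrable_and_setIntegral_one_add_sq_rpow_mul_eq hR.le (-δ)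
    (v := fun x => ‖fderiv ℝ u x‖ ^ 2) ((hu1.continuous_fderiv one_ne_zero).norm.pow 2)
    ((hsupp.fderiv ℝ).mono_of_eq_zero fun x hx => by simp [hx])
  refine sqrt_le_div_abs_mul_sqrt hδ (by positivity) ?_
  rw [hA, hB, div_pow, sq_sqrt (by positivity), ← integral_const_mul, ← integral_const_mul]
  refine integral_mono (hAint.const_mul _) (hBint.const_mul _) fun θ => ?_
  exact weighted_poincare_ray hR δ hu1 hsupp (norm_eq_of_mem_sphere θ)
    fun hδ => hb hδ _ (by simp [norm_smul, abs_of_pos hR])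

end
end
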